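/- Let G be a nontrivial additive group and let X_G be the set of pairs (a, f) with a > 0 real and f : ℝ → G such that f(t) = 0 for t ≤ a, f(t) = 0 for all sufficiently large t, and f is piecewise constant from the left on (a, ∞), equipped with the metric ρ(p,q) = (c(p,q) − a) + (c(p,q) − b) for p = (a,f), q = (b,g), where c(p,q) = max(a, b, inf{x : f = g on (x, ∞)}). Then (X_G, ρ) is an ℝ-tree: every two points are joined by a unique isometric map γ : [0, ρ(p,q)] → X_G with the given endpoints, and each side of every geodesic triangle is contained in the union of the other two sides. -/
import Mathlib


/-- A point of the tree `X_G`: a pair `(a, f)` with `a > 0`, `f : ℝ → G` vanishing on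
`(-∞, a]`, eventually zero, and piecewise constant from the left on `(a, ∞)`. -/
structure TreePt (G : Type*) [AddGroup G] where
  a : ℝ
  f : ℝ → G
  a_pos : 0 < a
  f_zero : ∀ t : ℝ, t ≤ a → f t = 0
  f_ev : ∃ b : ℝ, ∀ t : ℝ, b ≤ t → f t = 0
  f_pcl : ∀ x : ℝ, a < x → ∃ ε > 0, ∀ s ∈ Set.Icc (x - ε) x ∩ Set.Ioi a, f s = f x

/-- `c(p,q) = max(a, b, inf {x | f = g on (x, ∞)})`. -/
noncomputable def cval {G : Type*} [AddGroup G] (p q : TreePt G) : ℝ :=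
  max (max p.a q.a) (sInf {x : ℝ | ∀ t : ℝ, x < t → p.f t = q.f t})

/-- The metric `ρ(p,q) = (c(p,q) - a) + (c(p,q) - b)` on `X_G`. -/
noncomputable def rho {G : Type*} [AddGroup G] (p q : TreePt G) : ℝ :=
  (cval p q - p.a) + (cval p q - q.a)

/-- The partial order: `(a,f) ⪯ (b,g)` iff `a ≤ b` and `f = g` on `(b, ∞)`. -/
def tle {G : Type*} [AddGroup G] (p q : TreePt G) : Prop :=
  p.a ≤ q.a ∧ ∀ t : ℝ, q.a < t → p.f t = q.f t
/-- `γ : ℝ → X_G` restricted to `[0, ρ p q]` is an isometric (w.r.t. `ρ`)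
parameterization of a geodesic from `p` to `q`. -/
def IsRhoGeodesic {G : Type*} [AddGroup G] (p q : TreePt G) (γ : ℝ → TreePt G) : Prop :=
  γ 0 = p ∧ γ (rho p q) = q ∧
    ∀ s ∈ Set.Icc (0:ℝ) (rho p q), ∀ t ∈ Set.Icc (0:ℝ) (rho p q),
      rho (γ s) (γ t) = |s - t|

namespace Stmt13Aux

variable {G : Type*} [AddGroup G]

lemma tp_ext {p q : TreePt G} (h1 : p.a = q.a) (h2 : p.f = q.f) : p = q := by
  cases p; cases q; dsimp at h1 h2; subst h1; subst h2; rfl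

lemma le_cval_left (p q : TreePt G) : p.a ≤ cval p q :=
  le_trans (le_max_left _ _) (le_max_left _ _)

lemma le_cval_right (p q : TreePt G) : q.a ≤ cval p q :=
  le_trans (le_max_right _ _) (le_max_left _ _)

lemma cval_le {p q : TreePt G} {m : ℝ} (h1 : p.a ≤ m) (h2 : q.a ≤ m)
    (h3 : ∀ t, m < t → p.f t = q.f t) : cval p q ≤ m := by
  refine max_le (max_le h1 h2) ?_
  by_cases hb : BddBelow {x : ℝ | ∀ t, x < t → p.f t = q.f t}
  · exact csInf_le hb h3
  · rw [csInf_of_not_bddBelow hb, Real.sInf_empty]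
    exact le_trans (le_of_lt p.a_pos) h1

lemma cval_spec (p q : TreePt G) : ∀ t, cval p q < t → p.f t = q.f t := by
  intro t ht
  have hS : sInf {x : ℝ | ∀ u, x < u → p.f u = q.f u} < t :=
    lt_of_le_of_lt (le_max_right _ _) ht
  have hne : {x : ℝ | ∀ u, x < u → p.f u = q.f u}.Nonempty := by
    obtain ⟨b1, h1⟩ := p.f_ev
    obtain ⟨b2, h2⟩ := q.f_ev
    exact ⟨max b1 b2, fun u hu => by
      rw [h1 u (le_of_lt (lt_of_le_of_lt (le_max_left _ _) hu)),
          h2 u (le_of_lt (lt_of_le_of_lt (le_max_right _ _) hu))]⟩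
  by_cases hb : BddBelow {x : ℝ | ∀ u, x < u → p.f u = q.f u}
  · obtain ⟨x, hxS, hxt⟩ := exists_lt_of_csInf_lt hne hS
    exact hxS t hxt
  · obtain ⟨x, hxS, hxt⟩ := not_bddBelow_iff.mp hb t
    exact hxS t hxt

lemma cval_comm (p q : TreePt G) : cval p q = cval q p := by
  unfold cval
  rw [max_comm p.a q.a]
  congr 2
  ext x
  exact ⟨fun h t ht => (h t ht).symm, fun h t ht => (h t ht).symm⟩

lemma rho_comm (p q : TreePt G) : rho p q = rho q p := by
  unfold rho; rw [cval_comm]; ring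

lemma rho_nonneg (p q : TreePt G) : 0 ≤ rho p q := by
  have h1 := le_cval_left p q; have h2 := le_cval_right p q
  unfold rho; linarith

noncomputable def trunc (p : TreePt G) (x : ℝ) : TreePt G where
  a := max p.a x
  f := fun t => if max p.a x < t then p.f t else 0
  a_pos := lt_of_lt_of_le p.a_pos (le_max_left _ _)
  f_zero := fun t ht => if_neg (not_lt.mpr ht)
  f_ev := by
    obtain ⟨b, hb⟩ := p.f_ev
    refine ⟨b, fun t ht => ?_⟩
    by_cases h : max p.a x < t
    · rw [if_pos h, hb t ht]
    · rw [if_neg h]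
  f_pcl := by
    intro y hy
    obtain ⟨ε, hε, hεs⟩ := p.f_pcl y (lt_of_le_of_lt (le_max_left _ _) hy)
    refine ⟨ε, hε, fun s hs => ?_⟩
    obtain ⟨hs1, hs2⟩ := hs
    rw [if_pos (Set.mem_Ioi.mp hs2), if_pos hy]
    exact hεs s ⟨hs1, Set.mem_Ioi.mpr (lt_of_le_of_lt (le_max_left _ _) hs2)⟩

lemma trunc_a {p : TreePt G} {x : ℝ} (hax : p.a ≤ x) : (trunc p x).a = x := max_eq_right hax

lemma trunc_f_of_lt {p : TreePt G} {x : ℝ} (hax : p.a ≤ x) {t : ℝ} (h : x < t) :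
    (trunc p x).f t = p.f t := if_pos (by rw [max_eq_right hax]; exact h)

lemma trunc_f_of_le {p : TreePt G} {x : ℝ} (hax : p.a ≤ x) {t : ℝ} (h : t ≤ x) :
    (trunc p x).f t = 0 := if_neg (by rw [max_eq_right hax]; exact not_lt.mpr h)

lemma trunc_self (p : TreePt G) : trunc p p.a = p := by
  apply tp_ext
  · exact max_self _
  · funext t
    show (if max p.a p.a < t then p.f t else 0) = p.f t
    rw [max_self]
    by_cases h : p.a < t
    · rw [if_pos h]
    · rw [if_neg h]; exact (p.f_zero t (not_lt.mp h)).symm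

lemma cval_trunc_same {p : TreePt G} {x x' : ℝ} (hx : p.a ≤ x) (hx' : p.a ≤ x') :
    cval (trunc p x) (trunc p x') = max x x' := by
  apply le_antisymm
  · apply cval_le
    · rw [trunc_a hx]; exact le_max_left _ _
    · rw [trunc_a hx']; exact le_max_right _ _
    · intro t ht
      rw [trunc_f_of_lt hx (lt_of_le_of_lt (le_max_left _ _) ht),
          trunc_f_of_lt hx' (lt_of_le_of_lt (le_max_right _ _) ht)]
  · apply max_le
    · have := le_cval_left (trunc p x) (trunc p x'); rwa [trunc_a hx] at this
    · have := le_cval_right (trunc p x) (trunc p x'); rwa [trunc_a hx'] at this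

lemma rho_trunc_same {p : TreePt G} {x x' : ℝ} (hx : p.a ≤ x) (hx' : p.a ≤ x') :
    rho (trunc p x) (trunc p x') = |x - x'| := by
  unfold rho
  rw [cval_trunc_same hx hx', trunc_a hx, trunc_a hx']
  rcases le_total x x' with h | h
  · rw [max_eq_right h, abs_of_nonpos (by linarith)]; ring
  · rw [max_eq_left h, abs_of_nonneg (by linarith)]; ring

lemma cval_cross {p : TreePt G} (q : TreePt G) {x : ℝ} (hax : p.a ≤ x) (hxc : x ≤ cval p q) :
    cval (trunc p x) q = cval p q := by
  have hxm : x ≤ cval (trunc p x) q := by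
    have := le_cval_left (trunc p x) q; rwa [trunc_a hax] at this
  apply le_antisymm
  · apply cval_le
    · rw [trunc_a hax]; exact hxc
    · exact le_cval_right p q
    · intro t ht
      rw [trunc_f_of_lt hax (lt_of_le_of_lt hxc ht)]
      exact cval_spec p q t ht
  · apply cval_le (le_trans hax hxm) (le_cval_right _ _)
    intro t ht
    rw [← trunc_f_of_lt hax (lt_of_le_of_lt hxm ht)]
    exact cval_spec _ _ t ht

noncomputable def geo (p q : TreePt G) (s : ℝ) : TreePt G :=
  if s ≤ cval p q - p.a then trunc p (p.a + s) else trunc q (2 * cval p q - p.a - s)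

lemma det (p q : TreePt G) {z : TreePt G} {s : ℝ} (h1 : rho p z = s)
    (h2 : rho z q = rho p q - s) : z = geo p q s := by
  have h1' : (cval p z - p.a) + (cval p z - z.a) = s := h1
  have h2' : (cval z q - z.a) + (cval z q - q.a) =
      ((cval p q - p.a) + (cval p q - q.a)) - s := h2
  have hc1a : p.a ≤ cval p z := le_cval_left p z
  have hc1e : z.a ≤ cval p z := le_cval_right p z
  have hc2e : z.a ≤ cval z q := le_cval_left z q
  have hc2b : q.a ≤ cval z q := le_cval_right z q
  have hcle : cval p q ≤ max (cval p z) (cval z q) := by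
    apply cval_le (le_trans hc1a (le_max_left _ _)) (le_trans hc2b (le_max_right _ _))
    intro t ht
    rw [cval_spec p z t (lt_of_le_of_lt (le_max_left _ _) ht)]
    exact cval_spec z q t (lt_of_le_of_lt (le_max_right _ _) ht)
  rcases le_or_gt (cval p z) (cval z q) with hcc | hcc
  · rw [max_eq_right hcc] at hcle
    have he : cval p z = z.a := le_antisymm (by linarith) hc1e
    have hc2c : cval z q = cval p q := by linarith
    have hs : s = z.a - p.a := by linarith
    have hzc : z.a ≤ cval p q := by rw [← hc2c]; exact hc2e
    have hbr : s ≤ cval p q - p.a := by linarith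
    have hax : p.a ≤ p.a + s := by linarith
    simp only [geo, if_pos hbr]
    apply tp_ext
    · rw [trunc_a hax]; linarith
    · funext t
      by_cases ht : p.a + s < t
      · rw [trunc_f_of_lt hax ht]
        exact (cval_spec p z t (by linarith)).symm
      · rw [trunc_f_of_le hax (not_lt.mp ht)]
        exact z.f_zero t (by linarith [not_lt.mp ht])
  · rw [max_eq_left hcc.le] at hcle
    have he : cval z q = z.a := le_antisymm (by linarith) hc2e
    have hc1c : cval p z = cval p q := by linarith
    have hs : s = (cval p q - p.a) + (cval p q - z.a) := by linarith
    have hzc : z.a < cval p q := by rw [← he, ← hc1c]; exact hcc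
    have hbr : ¬ (s ≤ cval p q - p.a) := by push_neg; linarith
    have hy : 2 * cval p q - p.a - s = z.a := by linarith
    have hby : q.a ≤ 2 * cval p q - p.a - s := by rw [hy]; linarith
    simp only [geo, if_neg hbr]
    apply tp_ext
    · rw [trunc_a hby, hy]
    · funext t
      by_cases ht : 2 * cval p q - p.a - s < t
      · rw [trunc_f_of_lt hby ht]
        exact cval_spec z q t (by linarith)
      · rw [trunc_f_of_le hby (not_lt.mp ht)]
        exact z.f_zero t (by linarith [not_lt.mp ht])

lemma geo_spec (p q : TreePt G) : IsRhoGeodesic p q (geo p q) := by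
  have hac : p.a ≤ cval p q := le_cval_left p q
  have hbc : q.a ≤ cval p q := le_cval_right p q
  have hρ : rho p q = (cval p q - p.a) + (cval p q - q.a) := rfl
  refine ⟨?_, ?_, ?_⟩
  · simp only [geo, if_pos (by linarith : (0:ℝ) ≤ cval p q - p.a)]
    rw [add_zero, trunc_self]
  · by_cases hbr : rho p q ≤ cval p q - p.a
    · have hcb : cval p q = q.a := le_antisymm (by rw [hρ] at hbr; linarith) hbc
      have hax : p.a ≤ p.a + rho p q := by linarith [rho_nonneg p q]
      have hx : p.a + rho p q = cval p q := by rw [hρ]; linarith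
      simp only [geo, if_pos hbr]
      apply tp_ext
      · rw [trunc_a hax, hx, hcb]
      · funext t
        by_cases ht : p.a + rho p q < t
        · rw [trunc_f_of_lt hax ht]
          exact cval_spec p q t (by rw [← hx]; exact ht)
        · rw [trunc_f_of_le hax (not_lt.mp ht)]
          exact (q.f_zero t (by rw [← hcb, ← hx]; exact not_lt.mp ht)).symm
    · simp only [geo, if_neg hbr]
      have h2 : 2 * cval p q - p.a - rho p q = q.a := by rw [hρ]; ring
      rw [h2, trunc_self]
  · have main : ∀ s t : ℝ, 0 ≤ s → s ≤ t → t ≤ rho p q →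
        rho (geo p q s) (geo p q t) = t - s := by
      intro s t hs0 hst htρ
      by_cases h1 : s ≤ cval p q - p.a
      · by_cases h2 : t ≤ cval p q - p.a
        · simp only [geo, if_pos h1, if_pos h2]
          rw [rho_trunc_same (by linarith) (by linarith),
            show p.a + s - (p.a + t) = s - t by ring, abs_of_nonpos (by linarith)]
          ring
        · push_neg at h2
          simp only [geo, if_pos h1, if_neg (not_le.mpr h2)]
          have hax : p.a ≤ p.a + s := by linarith
          have hxc : p.a + s ≤ cval p q := by linarith
          have hby : q.a ≤ 2 * cval p q - p.a - t := by rw [hρ] at htρ; linarith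
          have hyc : 2 * cval p q - p.a - t ≤ cval p q := by linarith
          have e1 : cval (trunc q (2 * cval p q - p.a - t)) p = cval p q := by
            rw [cval_cross p hby (by rw [cval_comm q p]; exact hyc)]
            exact (cval_comm p q).symm
          have e2 : cval p (trunc q (2 * cval p q - p.a - t)) = cval p q :=
            (cval_comm _ _).trans e1
          have hcv : cval (trunc p (p.a + s)) (trunc q (2 * cval p q - p.a - t)) = cval p q :=
            (cval_cross (trunc q _) hax (by rw [e2]; exact hxc)).trans e2
          show (_ - _) + (_ - _) = t - s
          rw [hcv, trunc_a hax, trunc_a hby]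
          ring
      · by_cases h2 : t ≤ cval p q - p.a
        · exact absurd (le_trans hst h2) h1
        · push_neg at h1 h2
          simp only [geo, if_neg (not_le.mpr h1), if_neg (not_le.mpr h2)]
          have hbys : q.a ≤ 2 * cval p q - p.a - s := by rw [hρ] at htρ; linarith
          have hbyt : q.a ≤ 2 * cval p q - p.a - t := by rw [hρ] at htρ; linarith
          rw [rho_trunc_same hbys hbyt,
            show 2 * cval p q - p.a - s - (2 * cval p q - p.a - t) = t - s by ring,
            abs_of_nonneg (by linarith)]
    intro s hs t ht
    rcases le_total s t with h | h
    · rw [main s t hs.1 h ht.2, abs_sub_comm, abs_of_nonneg (by linarith)]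
    · rw [rho_comm, main t s ht.1 h hs.2, abs_of_nonneg (by linarith)]

lemma geo_pt {p q : TreePt G} {γ : ℝ → TreePt G} (hγ : IsRhoGeodesic p q γ) {s : ℝ}
    (hs : s ∈ Set.Icc (0:ℝ) (rho p q)) :
    rho p (γ s) = s ∧ rho (γ s) q = rho p q - s := by
  obtain ⟨hγ0, hγ1, hiso⟩ := hγ
  have h0 : (0:ℝ) ∈ Set.Icc (0:ℝ) (rho p q) := ⟨le_refl _, rho_nonneg p q⟩
  have hρm : rho p q ∈ Set.Icc (0:ℝ) (rho p q) := ⟨rho_nonneg p q, le_refl _⟩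
  constructor
  · have h := hiso 0 h0 s hs
    rw [hγ0] at h
    rw [h, zero_sub, abs_neg, abs_of_nonneg hs.1]
  · have h := hiso s hs (rho p q) hρm
    rw [hγ1] at h
    rw [h, abs_of_nonpos (by linarith [hs.2]), neg_sub]

lemma key {p q : TreePt G} {γ : ℝ → TreePt G} (hγ : IsRhoGeodesic p q γ) {z : TreePt G}
    {s : ℝ} (hs : s ∈ Set.Icc (0:ℝ) (rho p q)) (h1 : rho p z = s)
    (h2 : rho z q = rho p q - s) : z = γ s := by
  obtain ⟨e1, e2⟩ := geo_pt hγ hs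
  rw [det p q h1 h2]
  exact (det p q e1 e2).symm

lemma tri {p q r z : TreePt G} {s : ℝ} (hs0 : 0 ≤ s) (hsρ : s ≤ rho p q)
    (h1 : rho p z = s) (h2 : rho z q = rho p q - s) :
    (∃ s', s' ∈ Set.Icc (0:ℝ) (rho p r) ∧ rho p z = s' ∧ rho z r = rho p r - s') ∨
    (∃ s', s' ∈ Set.Icc (0:ℝ) (rho r q) ∧ rho r z = s' ∧ rho z q = rho r q - s') := by
  have hz := det p q h1 h2
  have hac : p.a ≤ cval p q := le_cval_left p q
  have hbc : q.a ≤ cval p q := le_cval_right p q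
  have hρ : rho p q = (cval p q - p.a) + (cval p q - q.a) := rfl
  by_cases hbr : s ≤ cval p q - p.a
  · -- z = trunc p (p.a + s)
    have hz' : z = trunc p (p.a + s) := by rw [hz]; simp only [geo, if_pos hbr]
    have hax : p.a ≤ p.a + s := by linarith
    have hxc : p.a + s ≤ cval p q := by linarith
    have had : p.a ≤ cval p r := le_cval_left p r
    have hrd : r.a ≤ cval p r := le_cval_right p r
    have hprv : rho p r = (cval p r - p.a) + (cval p r - r.a) := rfl
    by_cases hxd : p.a + s ≤ cval p r
    · left
      have hcv : cval z r = cval p r := by rw [hz']; exact cval_cross r hax hxd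
      have hzr : rho z r = (cval p r - (p.a + s)) + (cval p r - r.a) := by
        show (cval z r - z.a) + (cval z r - r.a) = _
        rw [hcv, hz', trunc_a hax]
        all_goals ring
      exact ⟨s, ⟨hs0, by linarith⟩, h1, by linarith⟩
    · right
      push_neg at hxd
      have hcv : cval r z = p.a + s := by
        rw [hz']
        apply le_antisymm
        · apply cval_le (le_trans hrd hxd.le) (le_of_eq (trunc_a hax))
          intro t ht
          rw [← cval_spec p r t (lt_trans hxd ht), trunc_f_of_lt hax ht]
        · have := le_cval_right r (trunc p (p.a + s)); rwa [trunc_a hax] at this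
      have hzr : rho r z = (p.a + s) - r.a := by
        show (cval r z - r.a) + (cval r z - z.a) = _
        rw [hcv, hz', trunc_a hax]
        all_goals ring
      have hcrq : cval r q = cval p q := by
        apply le_antisymm
        · apply cval_le (by linarith : r.a ≤ cval p q) hbc
          intro t ht
          rw [← cval_spec p r t (by linarith), cval_spec p q t ht]
        · have hrm : r.a ≤ cval r q := le_cval_left r q
          have hqm : q.a ≤ cval r q := le_cval_right r q
          have hmax : cval p q ≤ max (cval p r) (cval r q) := by
            apply cval_le (le_trans had (le_max_left _ _)) (le_trans hqm (le_max_right _ _))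
            intro t ht
            rw [cval_spec p r t (lt_of_le_of_lt (le_max_left _ _) ht)]
            exact cval_spec r q t (lt_of_le_of_lt (le_max_right _ _) ht)
          rcases le_total (cval p r) (cval r q) with h' | h'
          · rwa [max_eq_right h'] at hmax
          · rw [max_eq_left h'] at hmax; linarith
      have hrqv : rho r q = (cval p q - r.a) + (cval p q - q.a) := by
        show (cval r q - r.a) + (cval r q - q.a) = _
        rw [hcrq]
      refine ⟨(p.a + s) - r.a, ⟨by linarith, by linarith⟩, hzr, ?_⟩
      rw [h2, hρ, hrqv]; ring
  · -- z = trunc q y with y = 2c - p.a - s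
    push_neg at hbr
    have hz' : z = trunc q (2 * cval p q - p.a - s) := by
      rw [hz]; simp only [geo, if_neg (not_le.mpr hbr)]
    set y := 2 * cval p q - p.a - s with hydef
    have hby : q.a ≤ y := by rw [hρ] at hsρ; simp only [hydef]; linarith
    have hyc : y ≤ cval p q := by simp only [hydef]; linarith
    have hqd : q.a ≤ cval q r := le_cval_left q r
    have hrd : r.a ≤ cval q r := le_cval_right q r
    have hrqv' : rho r q = (cval q r - r.a) + (cval q r - q.a) := by
      show (cval r q - r.a) + (cval r q - q.a) = _
      rw [cval_comm r q]
    by_cases hyd : y ≤ cval q r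
    · right
      have hcv : cval z r = cval q r := by rw [hz']; exact cval_cross r hby hyd
      have hzr : rho r z = (cval q r - r.a) + (cval q r - y) := by
        rw [rho_comm]
        show (cval z r - z.a) + (cval z r - r.a) = _
        rw [hcv, hz', trunc_a hby]
        all_goals ring
      refine ⟨(cval q r - r.a) + (cval q r - y), ⟨by linarith, by linarith⟩, hzr, ?_⟩
      rw [h2, hρ, hrqv']; simp only [hydef]; ring
    · left
      push_neg at hyd
      have hcv : cval r z = y := by
        rw [hz']
        apply le_antisymm
        · apply cval_le (le_trans hrd hyd.le) (le_of_eq (trunc_a hby))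
          intro t ht
          rw [← cval_spec q r t (lt_trans hyd ht), trunc_f_of_lt hby ht]
        · have := le_cval_right r (trunc q y); rwa [trunc_a hby] at this
      have hzr : rho r z = y - r.a := by
        show (cval r z - r.a) + (cval r z - z.a) = _
        rw [hcv, hz', trunc_a hby]
        all_goals ring
      have hcpr : cval p r = cval p q := by
        apply le_antisymm
        · apply cval_le hac (by linarith : r.a ≤ cval p q)
          intro t ht
          rw [cval_spec p q t ht, cval_spec q r t (by linarith)]
        · have hpm : p.a ≤ cval p r := le_cval_left p r
          have hrm : r.a ≤ cval p r := le_cval_right p r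
          have hmax : cval p q ≤ max (cval q r) (cval p r) := by
            apply cval_le (le_trans hpm (le_max_right _ _)) (le_trans hqd (le_max_left _ _))
            intro t ht
            rw [cval_spec p r t (lt_of_le_of_lt (le_max_right _ _) ht),
              ← cval_spec q r t (lt_of_le_of_lt (le_max_left _ _) ht)]
          rcases le_total (cval q r) (cval p r) with h' | h'
          · rwa [max_eq_right h'] at hmax
          · rw [max_eq_left h'] at hmax; linarith
      have hpzv : rho p z = (cval p q - p.a) + (cval p q - y) := by
        rw [h1]; simp only [hydef]; ring
      have hprv : rho p r = (cval p q - p.a) + (cval p q - r.a) := by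
        show (cval p r - p.a) + (cval p r - r.a) = _
        rw [hcpr]
      refine ⟨(cval p q - p.a) + (cval p q - y), ⟨by linarith, by linarith⟩, hpzv, ?_⟩
      rw [rho_comm, hzr, hprv]; ring

end Stmt13Aux

open Stmt13Aux in
/-- `(X_G, ρ)` is an ℝ-tree: geodesics exist, are unique, and each side of every
geodesic triangle is contained in the union of the other two sides. -/
theorem stmt13 {G : Type*} [AddGroup G] [Nontrivial G] :
    (∀ p q : TreePt G, ∃ γ : ℝ → TreePt G, IsRhoGeodesic p q γ) ∧
    (∀ (p q : TreePt G) (γ₁ γ₂ : ℝ → TreePt G),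
      IsRhoGeodesic p q γ₁ → IsRhoGeodesic p q γ₂ →
      Set.EqOn γ₁ γ₂ (Set.Icc (0:ℝ) (rho p q))) ∧
    (∀ (p q r : TreePt G) (γpq γpr γrq : ℝ → TreePt G),
      IsRhoGeodesic p q γpq → IsRhoGeodesic p r γpr → IsRhoGeodesic r q γrq →
      γpq '' Set.Icc (0:ℝ) (rho p q) ⊆
        γpr '' Set.Icc (0:ℝ) (rho p r) ∪ γrq '' Set.Icc (0:ℝ) (rho r q)) := by
  refine ⟨fun p q => ⟨geo p q, geo_spec p q⟩, ?_, ?_⟩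
  · intro p q γ₁ γ₂ h₁ h₂ s hs
    obtain ⟨e1, e2⟩ := geo_pt h₁ hs
    exact key h₂ hs e1 e2
  · intro p q r γpq γpr γrq hpq hpr hrq w hw
    obtain ⟨s, hs, rfl⟩ := hw
    obtain ⟨e1, e2⟩ := geo_pt hpq hs
    rcases tri (r := r) hs.1 hs.2 e1 e2 with ⟨s', hs', f1, f2⟩ | ⟨s', hs', f1, f2⟩
    · exact Or.inl ⟨s', hs', (key hpr hs' f1 f2).symm⟩
    · exact Or.inr ⟨s', hs', (key hrq hs' f1 f2).symm⟩
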